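/- For any Hermitian positive definite matrices Ψ, Ψ₀ of the same size and any vector h, the quadratic form h† Ψ^{-1} h is bounded below by its first-order Taylor expansion around Ψ₀: h† Ψ^{-1} h ≥ h† Ψ₀^{-1} h − h† Ψ₀^{-1} (Ψ − Ψ₀) Ψ₀^{-1} h. -/
import Mathlib


open Matrix ComplexOrder

/-- First-order Taylor lower bound for `Ψ ↦ h† Ψ⁻¹ h` around a positive definite `Ψ₀`:
`h† Ψ⁻¹ h ≥ h† Ψ₀⁻¹ h − h† Ψ₀⁻¹ (Ψ − Ψ₀) Ψ₀⁻¹ h`. -/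
theorem stmt1 {n : ℕ} (Ψ Ψ₀ : Matrix (Fin n) (Fin n) ℂ) (hΨ : Ψ.PosDef) (hΨ₀ : Ψ₀.PosDef)
    (h : Fin n → ℂ) :
    (star h ⬝ᵥ (Ψ₀⁻¹ *ᵥ h)).re
      - (star h ⬝ᵥ ((Ψ₀⁻¹ * (Ψ - Ψ₀) * Ψ₀⁻¹) *ᵥ h)).re
      ≤ (star h ⬝ᵥ (Ψ⁻¹ *ᵥ h)).re := by
  set A := Ψ⁻¹ - Ψ₀⁻¹ with hA
  have hΨ1 : Ψ * Ψ⁻¹ = 1 := Matrix.mul_nonsing_inv _ ((Matrix.isUnit_iff_isUnit_det _).mp hΨ.isUnit)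
  have hΨ1' : Ψ⁻¹ * Ψ = 1 := Matrix.nonsing_inv_mul _ ((Matrix.isUnit_iff_isUnit_det _).mp hΨ.isUnit)
  have hΨ₀1 : Ψ₀ * Ψ₀⁻¹ = 1 := Matrix.mul_nonsing_inv _ ((Matrix.isUnit_iff_isUnit_det _).mp hΨ₀.isUnit)
  have key : A * Ψ * A = Ψ⁻¹ - Ψ₀⁻¹ + Ψ₀⁻¹ * (Ψ - Ψ₀) * Ψ₀⁻¹ := by
    simp only [hA, sub_mul, mul_sub, Matrix.mul_assoc, hΨ1, hΨ1', Matrix.mul_one,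
      Matrix.one_mul, hΨ₀1]
    abel
  have hAherm : Aᴴ = A := by
    simp [hA, Matrix.conjTranspose_sub, hΨ.isHermitian.inv.eq, hΨ₀.isHermitian.inv.eq]
  have expand : star h ⬝ᵥ ((A * Ψ * A) *ᵥ h)
      = star h ⬝ᵥ (Ψ⁻¹ *ᵥ h) - star h ⬝ᵥ (Ψ₀⁻¹ *ᵥ h)
        + star h ⬝ᵥ ((Ψ₀⁻¹ * (Ψ - Ψ₀) * Ψ₀⁻¹) *ᵥ h) := by
    rw [key]
    simp [Matrix.sub_mulVec, Matrix.add_mulVec, dotProduct_sub, dotProduct_add]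
  have quad : star h ⬝ᵥ ((A * Ψ * A) *ᵥ h)
      = star (A *ᵥ h) ⬝ᵥ (Ψ *ᵥ (A *ᵥ h)) := by
    rw [Matrix.star_mulVec, hAherm]
    rw [Matrix.mulVec_mulVec]
    rw [← Matrix.dotProduct_mulVec]
    rw [Matrix.mulVec_mulVec]
    rw [Matrix.mul_assoc]
  have hnn : 0 ≤ (star (A *ᵥ h) ⬝ᵥ (Ψ *ᵥ (A *ᵥ h))).re := by
    have := hΨ.posSemidef.re_dotProduct_nonneg (A *ᵥ h)
    simpa using this
  rw [quad] at expand
  have : (star (A *ᵥ h) ⬝ᵥ (Ψ *ᵥ (A *ᵥ h))).re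
      = (star h ⬝ᵥ (Ψ⁻¹ *ᵥ h)).re - (star h ⬝ᵥ (Ψ₀⁻¹ *ᵥ h)).re
        + (star h ⬝ᵥ ((Ψ₀⁻¹ * (Ψ - Ψ₀) * Ψ₀⁻¹) *ᵥ h)).re := by
    rw [expand]; simp
  linarith
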